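/- Let t_H > 0 and t_V > 0 be real numbers and let v ∈ ℝ² be a nonzero vector. If a and b are integers with a ≥ 1 and b ≥ 1 such that v is an eigenvector of M_H(t_H)^a · M_V(t_V)^a and also an eigenvector of M_H(t_H)^b · M_V(t_V)^b (for some real eigenvalues), then a = b. In other words, a given nonzero vector is an eigenvector of M_H(t_H)^a · M_V(t_V)^a for at most one positive integer a. -/
import Mathlib


open Matrix

/-- The horizontal shear matrix `[[1, t], [0, 1]]`. -/
def MH (t : ℝ) : Matrix (Fin 2) (Fin 2) ℝ := !![1, t; 0, 1]

/-- The vertical shear matrix `[[1, 0], [t, 1]]`. -/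
def MV (t : ℝ) : Matrix (Fin 2) (Fin 2) ℝ := !![1, 0; t, 1]

lemma MH_pow (t : ℝ) (n : ℕ) : (MH t) ^ n = !![1, (n : ℝ) * t; 0, 1] := by
  induction n with
  | zero => simp [Matrix.one_fin_two]
  | succ k ih =>
    rw [pow_succ, ih, MH, Matrix.mul_fin_two]
    push_cast
    congr 1 <;> ring

lemma MV_pow (t : ℝ) (n : ℕ) : (MV t) ^ n = !![1, 0; (n : ℝ) * t, 1] := by
  induction n with
  | zero => simp [Matrix.one_fin_two]
  | succ k ih =>
    rw [pow_succ, ih, MV, Matrix.mul_fin_two]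
    push_cast
    congr 1 <;> ring

lemma key_lemma (tH tV : ℝ) (htH : 0 < tH) (htV : 0 < tV)
    (v : Fin 2 → ℝ) (hv : v ≠ 0)
    (n : ℕ) (hn : 1 ≤ n) (lam : ℝ)
    (heig : ((MH tH) ^ n * (MV tV) ^ n).mulVec v = lam • v) :
    (n : ℝ) * (tH * tV * (v 0) * (v 1)) = tV * (v 0) ^ 2 - tH * (v 1) ^ 2 ∧
      v 0 ≠ 0 ∧ v 1 ≠ 0 := by
  rw [MH_pow, MV_pow, Matrix.mul_fin_two] at heig
  have e0 := congr_fun heig 0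
  have e1 := congr_fun heig 1
  simp [Matrix.mulVec, dotProduct, Fin.sum_univ_two] at e0 e1
  set x := v 0 with hx
  set y := v 1 with hy
  have hn' : (0 : ℝ) < n := by exact_mod_cast hn
  have hntV : (n : ℝ) * tV ≠ 0 := by positivity
  have hntH : (n : ℝ) * tH ≠ 0 := by positivity
  have hy0 : y ≠ 0 := by
    intro h
    rw [h] at e1
    have hxz : x = 0 := by
      have h1 : (n : ℝ) * tV * x = 0 := by linarith
      exact (mul_eq_zero.1 h1).resolve_left hntV
    apply hv
    funext i
    fin_cases i
    · exact hxz
    · exact h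
  have hx0 : x ≠ 0 := by
    intro h
    rw [h] at e0
    have h1 : (n : ℝ) * tH * y = 0 := by linarith
    exact hy0 ((mul_eq_zero.1 h1).resolve_left hntH)
  refine ⟨?_, hx0, hy0⟩
  have h2 : (n : ℝ) * ((n : ℝ) * (tH * tV * x * y) - (tV * x ^ 2 - tH * y ^ 2)) = 0 := by
    linear_combination y * e0 - x * e1
  rcases mul_eq_zero.1 h2 with h' | h'
  · exact absurd h' hn'.ne'
  · linarith

/-- A given nonzero vector of `ℝ²` is an eigenvector of
`M_H(t_H)^a · M_V(t_V)^a` for at most one positive integer `a`. -/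
theorem eigenvector_unique_power (tH tV : ℝ) (htH : 0 < tH) (htV : 0 < tV)
    (v : Fin 2 → ℝ) (hv : v ≠ 0)
    (a b : ℕ) (ha : 1 ≤ a) (hb : 1 ≤ b)
    (lam mu : ℝ)
    (heig₁ : ((MH tH) ^ a * (MV tV) ^ a).mulVec v = lam • v)
    (heig₂ : ((MH tH) ^ b * (MV tV) ^ b).mulVec v = mu • v) :
    a = b := by
  obtain ⟨hA, hx0, hy0⟩ := key_lemma tH tV htH htV v hv a ha lam heig₁
  obtain ⟨hB, _, _⟩ := key_lemma tH tV htH htV v hv b hb mu heig₂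
  have hne : tH * tV * v 0 * v 1 ≠ 0 := by
    apply mul_ne_zero (mul_ne_zero (mul_ne_zero htH.ne' htV.ne') hx0) hy0
  have : (a : ℝ) = b := by
    have := hA.trans hB.symm
    exact mul_right_cancel₀ hne this
  exact_mod_cast this
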